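/- arXiv:1201.3299 — 11 statements merged into one kernel-verified Lean document; each statement's English description precedes it below -/
import Mathlib

section
/- For the all-but subtraction game with finite excluded set X ⊂ ℕ (positive integers), defined by G(0)=0 and G(n) = mex { G(n - s) : s ∈ ℕ_{>0} \ X, s ≤ n }, and any nimber k, if n = min { i : G(i) ≥ k } then every m ≥ n + max(X) satisfies G(m) ≥ k. -/
/-- The minimum excludant of a set of naturals. -/
noncomputable def mex (S : Set ℕ) : ℕ := sInf {m | m ∉ S}

/-- `G` is the Grundy (nim) sequence of the all-but subtraction game with
excluded set `X`: `G n = mex { G (n - t) : t > 0, t ∉ X, t ≤ n ∧ G (n - t) = m }`. -/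
def IsGrundy (X : Set ℕ) (G : ℕ → ℕ) : Prop :=
  ∀ n, G n = mex {m | ∃ t, 0 < t ∧ t ∉ X ∧ t ≤ n ∧ G (n - t) = m}

lemma lt_mex_mem {S : Set ℕ} {j : ℕ} (h : j < mex S) : j ∈ S := by
  by_contra hj
  exact absurd (Nat.sInf_le hj) (not_le.mpr h)

lemma le_mex_of {S : Set ℕ} {k j0 : ℕ} (hj0 : j0 ∉ S) (h : ∀ j < k, j ∈ S) :
    k ≤ mex S := by
  by_contra hk
  push_neg at hk
  exact (Nat.sInf_mem (⟨j0, hj0⟩ : {m | m ∉ S}.Nonempty)) (h _ hk)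

lemma exists_not_mem_moves (G : ℕ → ℕ) (X : Set ℕ) (m : ℕ) :
    ∃ j0, j0 ∉ {j | ∃ t, 0 < t ∧ t ∉ X ∧ t ≤ m ∧ G (m - t) = j} := by
  refine ⟨(Finset.range (m + 1)).sup G + 1, ?_⟩
  rintro ⟨t, ht0, htX, htm, hGt⟩
  have : G (m - t) ≤ (Finset.range (m + 1)).sup G :=
    Finset.le_sup (Finset.mem_range.mpr (Nat.lt_succ_of_le (Nat.sub_le m t)))
  omega

lemma move_exists (X : Set ℕ) (G : ℕ → ℕ) (hG : IsGrundy X G) {m j : ℕ}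
    (h : j < G m) : ∃ p, p < m ∧ G p = j := by
  rw [hG m] at h
  obtain ⟨t, ht0, htX, htm, hGt⟩ := lt_mex_mem h
  exact ⟨m - t, Nat.sub_lt (lt_of_lt_of_le ht0 htm) ht0, hGt⟩

lemma propagate (X : Finset ℕ) (hne : X.Nonempty) (G : ℕ → ℕ)
    (hG : IsGrundy (↑X) G) (k n m : ℕ) (hkn : k ≤ G n)
    (hm : n + X.max' hne ≤ m) : k ≤ G m := by
  rw [hG m]
  obtain ⟨j0, hj0⟩ := exists_not_mem_moves G (↑X) m
  refine le_mex_of hj0 ?_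
  intro j hj
  obtain ⟨p, hpn, hGp⟩ := move_exists (↑X) G hG (lt_of_lt_of_le hj hkn)
  refine ⟨m - p, by omega, ?_, Nat.sub_le m p, ?_⟩
  · intro hx
    have := X.le_max' _ (Finset.mem_coe.mp hx)
    omega
  · have hp : m - (m - p) = p := by omega
    rw [hp, hGp]

lemma unbounded (X : Finset ℕ) (hne : X.Nonempty) (G : ℕ → ℕ)
    (hG : IsGrundy (↑X) G) : ∀ k, ∃ i, k ≤ G i := by
  intro k
  induction k with
  | zero => exact ⟨0, Nat.zero_le _⟩
  | succ k ih =>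
    obtain ⟨i, hi⟩ := ih
    have hne' : {i | k ≤ G i}.Nonempty := ⟨i, hi⟩
    set n := sInf {i | k ≤ G i} with hn
    have hGn : k ≤ G n := Nat.sInf_mem hne'
    have hmin : ∀ p < n, G p < k := by
      intro p hp
      by_contra h
      push_neg at h
      have h2 : n ≤ p := hn ▸ Nat.sInf_le h
      omega
    have hGnk : G n = k := by
      by_contra h
      obtain ⟨p, hpn, hGp⟩ := move_exists (↑X) G hG (lt_of_le_of_ne hGn (Ne.symm h))
      have := hmin p hpn
      omega
    set M := X.max' hne with hM
    refine ⟨n + M + 1, ?_⟩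
    rw [hG (n + M + 1)]
    obtain ⟨j0, hj0⟩ := exists_not_mem_moves G (↑X) (n + M + 1)
    refine le_mex_of hj0 ?_
    intro j hj
    rcases Nat.lt_succ_iff_lt_or_eq.mp hj with hjk | rfl
    · obtain ⟨p, hpn, hGp⟩ := move_exists (↑X) G hG (lt_of_lt_of_le hjk hGn)
      refine ⟨n + M + 1 - p, by omega, ?_, by omega, ?_⟩
      · intro hx
        have := X.le_max' _ (Finset.mem_coe.mp hx)
        omega
      · have hp : n + M + 1 - (n + M + 1 - p) = p := by omega
        rw [hp, hGp]
    · refine ⟨M + 1, by omega, ?_, by omega, ?_⟩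
      · intro hx
        have := X.le_max' _ (Finset.mem_coe.mp hx)
        omega
      · have hp : n + M + 1 - (M + 1) = n := by omega
        rw [hp, hGnk]

theorem stmt_0 (X : Finset ℕ) (hne : X.Nonempty) (hpos : ∀ x ∈ X, 0 < x)
    (G : ℕ → ℕ) (hG : IsGrundy (↑X) G) (k n : ℕ)
    (hn : n = sInf {i | k ≤ G i}) :
    ∀ m, n + X.max' hne ≤ m → k ≤ G m := by
  intro m hm
  obtain ⟨i, hi⟩ := unbounded X hne G hG k
  have hGn : k ≤ G n := by
    rw [hn]
    exact Nat.sInf_mem (⟨i, hi⟩ : {i | k ≤ G i}.Nonempty)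
  exact propagate X hne G hG k n m hGn hm
end

section
/- For any finite set X of positive integers, the Grundy sequence G of the all-but subtraction game with excluded set X is ultimately arithmetic periodic: there exist n₀, p ∈ ℕ with p > 0 and s ∈ ℕ such that for all n ≥ n₀, G(n + p) = G(n) + s. -/
open Set

lemma mex_notMem {S : Set ℕ} (h : Sᶜ.Nonempty) : mex S ∉ S :=
  Nat.sInf_mem h

lemma mem_of_lt_mex {S : Set ℕ} {v : ℕ} (h : v < mex S) : v ∈ S :=
  not_not.mp (Nat.notMem_of_lt_sInf h)

lemma mex_mono {S T : Set ℕ} (hT : Tᶜ.Nonempty) (h : S ⊆ T) : mex S ≤ mex T :=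
  Nat.sInf_le fun hS => mex_notMem hT (h hS)

lemma mex_eq_of_notMem_of_Iio_subset {S : Set ℕ} {g : ℕ} (h₁ : g ∉ S) (h₂ : Iio g ⊆ S) :
    mex S = g :=
  le_antisymm (Nat.sInf_le h₁) (le_of_not_gt fun h => mex_notMem ⟨g, h₁⟩ (h₂ h))

lemma mex_Iio (k : ℕ) : mex (Iio k) = k :=
  mex_eq_of_notMem_of_Iio_subset (lt_irrefl k) subset_rfl

lemma mex_Iio_union_add {A B : Set ℕ} {b s : ℕ} (hA : A.Finite)
    (h : ∀ v, b ≤ v → (v ∈ A ↔ v + s ∈ B)) :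
    mex (Iio (b + s) ∪ B) = mex (Iio b ∪ A) + s := by
  set g := mex (Iio b ∪ A)
  have hg : g ∉ Iio b ∪ A := mex_notMem ((finite_Iio b).union hA).infinite_compl.nonempty
  have hbg : b ≤ g := le_of_not_gt fun hlt => hg (Or.inl hlt)
  refine mex_eq_of_notMem_of_Iio_subset ?_ fun v hv => ?_
  · rintro (hlt | hB)
    · exact (mem_Iio.mp hlt).not_ge (by omega)
    · exact hg (Or.inr ((h g hbg).mpr hB))
  · by_cases hvb : v < b + s
    · exact Or.inl hvb
    · have hvA : v - s ∈ Iio b ∪ A := mem_of_lt_mex (by simp only [mem_Iio] at hv; omega)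
      rcases hvA with hlt | hA'
      · exact absurd (mem_Iio.mp hlt) (by omega)
      · right
        simpa [Nat.sub_add_cancel (by omega : s ≤ v)] using (h _ (by omega)).mp hA'

noncomputable def mexBelow (G : ℕ → ℕ) (n : ℕ) : ℕ := mex (G '' Iio n)

def options (X : Set ℕ) (G : ℕ → ℕ) (n : ℕ) : Set ℕ :=
  {m | ∃ t, 0 < t ∧ t ∉ X ∧ t ≤ n ∧ G (n - t) = m}

def nearOptions (X : Set ℕ) (G : ℕ → ℕ) (M n : ℕ) : Set ℕ :=
  {m | ∃ t, 0 < t ∧ t ≤ M ∧ t ∉ X ∧ G (n - t) = m}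

lemma nearOptions_finite (X : Set ℕ) (G : ℕ → ℕ) (M n : ℕ) : (nearOptions X G M n).Finite :=
  ((finite_Iic M).image fun t => G (n - t)).subset
    fun _ ⟨t, _, htM, _, hm⟩ => ⟨t, htM, hm⟩

lemma options_subset_image_Iio (X : Set ℕ) (G : ℕ → ℕ) (n : ℕ) :
    options X G n ⊆ G '' Iio n :=
  fun _ ⟨t, ht, _, htn, hm⟩ => ⟨n - t, by simp only [mem_Iio]; omega, hm⟩

lemma insert_Iio_eq_Iio {a b : ℕ} (h : a ≤ b) : insert a (Iio b) = Iio (b + (a + 1 - b)) := by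
  ext v
  simp only [mem_insert_iff, mem_Iio]
  omega

lemma image_Iio_succ (G : ℕ → ℕ) (n : ℕ) : G '' Iio (n + 1) = insert (G n) (G '' Iio n) := by
  rw [← image_insert_eq]
  congr 1
  ext v
  simp only [mem_insert_iff, mem_Iio]
  omega

section Grundy

variable {X : Set ℕ} {G : ℕ → ℕ}

lemma IsGrundy.le_mexBelow (hG : IsGrundy X G) (n : ℕ) : G n ≤ mexBelow G n :=
  (hG n).trans_le <|
    mex_mono ((finite_Iio n).image G).infinite_compl.nonempty (options_subset_image_Iio X G n)

lemma IsGrundy.image_Iio (hG : IsGrundy X G) (n : ℕ) : G '' Iio n = Iio (mexBelow G n) := by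
  induction n with
  | zero =>
    have h₀ : Iio (0 : ℕ) = ∅ := by simp
    rw [mexBelow, h₀, image_empty, ← h₀, mex_Iio]
  | succ n ih =>
    rw [mexBelow, image_Iio_succ, ih, insert_Iio_eq_Iio (hG.le_mexBelow n), mex_Iio]

lemma IsGrundy.mexBelow_succ (hG : IsGrundy X G) (n : ℕ) :
    mexBelow G (n + 1) = mexBelow G n + (G n + 1 - mexBelow G n) := by
  rw [mexBelow, image_Iio_succ, hG.image_Iio, insert_Iio_eq_Iio (hG.le_mexBelow n), mex_Iio]

lemma IsGrundy.mexBelow_mono (hG : IsGrundy X G) {a b : ℕ} (h : a ≤ b) :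
    mexBelow G a ≤ mexBelow G b := by
  rw [← Iio_subset_Iio_iff, ← hG.image_Iio, ← hG.image_Iio]
  exact image_mono (Iio_subset_Iio h)

lemma IsGrundy.mexBelow_add_le (hG : IsGrundy X G) (n d : ℕ) :
    mexBelow G (n + d) ≤ mexBelow G n + d := by
  induction d with
  | zero => rfl
  | succ d ih =>
    rw [← Nat.add_assoc, hG.mexBelow_succ]
    have := hG.le_mexBelow (n + d)
    omega

lemma IsGrundy.lt_mexBelow (hG : IsGrundy X G) {k n : ℕ} (h : k < n) : G k < mexBelow G n := by
  rw [← mem_Iio, ← hG.image_Iio]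
  exact mem_image_of_mem G h

lemma IsGrundy.options_eq (hG : IsGrundy X G) {M n : ℕ} (hX : ∀ x ∈ X, x < M) (hMn : M ≤ n) :
    options X G n = Iio (mexBelow G (n - M)) ∪ nearOptions X G M n := by
  ext m
  constructor
  · rintro ⟨t, ht, htX, htn, rfl⟩
    by_cases htM : t ≤ M
    · exact Or.inr ⟨t, ht, htM, htX, rfl⟩
    · exact Or.inl (hG.lt_mexBelow (by omega))
  · rintro (hm | ⟨t, ht, htM, htX, rfl⟩)
    · rw [← hG.image_Iio] at hm
      obtain ⟨k, hk, rfl⟩ := hm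
      rw [mem_Iio] at hk
      refine ⟨n - k, by omega, fun hkX => ?_, by omega, by rw [Nat.sub_sub_self (by omega)]⟩
      have := hX _ hkX
      omega
    · exact ⟨t, ht, htX, by omega, rfl⟩

end Grundy

/-- Truncated subtraction sends every value below the base `mexBelow G (n - M)` to `0`: such
values are options of `n` anyway. -/
noncomputable def window (G : ℕ → ℕ) (M n j : ℕ) : ℕ := G (n - j) + 1 - mexBelow G (n - M)

def WindowsAgree (G : ℕ → ℕ) (M n m s : ℕ) : Prop :=
  mexBelow G (m - M) = mexBelow G (n - M) + s ∧
    ∀ j, 0 < j → j ≤ M → window G M m j = window G M n j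

section Window

variable {X : Set ℕ} {G : ℕ → ℕ} {M : ℕ}

lemma IsGrundy.window_le (hG : IsGrundy X G) {n j : ℕ} (hj : 0 < j) (hjn : j ≤ n) :
    window G M n j ≤ M := by
  have h₁ := hG.lt_mexBelow (show n - j < n by omega)
  have h₂ := hG.mexBelow_mono (show n ≤ n - M + M by omega)
  have h₃ := hG.mexBelow_add_le (n - M) M
  unfold window
  omega

lemma IsGrundy.exists_windowsAgree (hG : IsGrundy X G) (M : ℕ) :
    ∃ n m s, M ≤ n ∧ n < m ∧ WindowsAgree G M n m s := by
  obtain ⟨a, b, hab, heq⟩ := Set.Finite.exists_lt_map_eq_of_forall_mem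
    (f := fun k (j : Fin M) => window G M (M + k) (j + 1)) (t := {w | ∀ j, w j ∈ Iic M})
    (fun k j => hG.window_le (by omega) (by omega)) (Set.Finite.pi' fun _ => finite_Iic M)
  refine ⟨M + a, M + b, mexBelow G (M + b - M) - mexBelow G (M + a - M), by omega, by omega,
    ?_, fun j hj hjM => ?_⟩
  · have := hG.mexBelow_mono (show M + a - M ≤ M + b - M by omega)
    omega
  · simpa [Nat.sub_add_cancel hj] using (congrFun heq ⟨j - 1, by omega⟩).symm

lemma IsGrundy.eq_add_of_windowsAgree (hG : IsGrundy X G) (hX : ∀ x ∈ X, x < M) {n m s : ℕ}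
    (hn : M ≤ n) (hm : M ≤ m) (h : WindowsAgree G M n m s) : G m = G n + s := by
  obtain ⟨hbase, hwin⟩ := h
  rw [show G m = mex (options X G m) from hG m, show G n = mex (options X G n) from hG n,
    hG.options_eq hX hn, hG.options_eq hX hm, hbase]
  refine mex_Iio_union_add (nearOptions_finite X G M n) fun v hv => ⟨?_, ?_⟩
  · rintro ⟨t, ht, htM, htX, rfl⟩
    have := hwin t ht htM
    unfold window at this
    exact ⟨t, ht, htM, htX, by omega⟩
  · rintro ⟨t, ht, htM, htX, hGt⟩
    have := hwin t ht htM
    unfold window at this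
    exact ⟨t, ht, htM, htX, by omega⟩

lemma IsGrundy.windowsAgree_succ (hG : IsGrundy X G) (hX : ∀ x ∈ X, x < M) (hM : 0 < M)
    {n m s : ℕ} (hn : M ≤ n) (hm : M ≤ m) (h : WindowsAgree G M n m s) :
    WindowsAgree G M (n + 1) (m + 1) s := by
  have hGm := hG.eq_add_of_windowsAgree hX hn hm h
  obtain ⟨hbase, hwin⟩ := h
  have hstep : ∀ k, M ≤ k → mexBelow G (k + 1 - M) = mexBelow G (k - M) + window G M k M := by
    intro k hk
    rw [Nat.sub_add_comm hk, hG.mexBelow_succ]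
    rfl
  have hn' := hstep n hn
  have hm' := hstep m hm
  have hlast := hwin M hM le_rfl
  refine ⟨by omega, fun j hj hjM => ?_⟩
  unfold window
  rcases Nat.lt_or_ge 1 j with hj1 | hj1
  · have := hwin (j - 1) (by omega) (by omega)
    unfold window at this
    rw [show n + 1 - j = n - (j - 1) by omega, show m + 1 - j = m - (j - 1) by omega]
    omega
  · obtain rfl : j = 1 := by omega
    simp only [Nat.add_sub_cancel]
    omega

lemma IsGrundy.windowsAgree_add (hG : IsGrundy X G) (hX : ∀ x ∈ X, x < M) (hM : 0 < M)
    {n m s : ℕ} (hn : M ≤ n) (hm : M ≤ m) (h : WindowsAgree G M n m s) (d : ℕ) :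
    WindowsAgree G M (n + d) (m + d) s := by
  induction d with
  | zero => exact h
  | succ d ih =>
    exact hG.windowsAgree_succ hX hM (Nat.le_add_right_of_le hn) (Nat.le_add_right_of_le hm) ih

end Window

theorem stmt_1_general (X : Finset ℕ)
    (G : ℕ → ℕ) (hG : IsGrundy (↑X) G) :
    ∃ n₀ p s : ℕ, 0 < p ∧ ∀ n, n₀ ≤ n → G (n + p) = G n + s := by
  set M := X.sup id + 1
  have hX : ∀ x ∈ (X : Set ℕ), x < M := fun x hx =>
    Nat.lt_succ_of_le (Finset.le_sup (f := id) hx)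
  obtain ⟨n₁, n₂, s, hn₁, hlt, hagree⟩ := hG.exists_windowsAgree M
  refine ⟨n₁, n₂ - n₁, s, by omega, fun n hn => ?_⟩
  obtain ⟨d, rfl⟩ := Nat.exists_eq_add_of_le hn
  have hagree' := hG.windowsAgree_add hX (Nat.succ_pos _) hn₁ (by omega) hagree d
  rw [show n₁ + d + (n₂ - n₁) = n₂ + d by omega]
  exact hG.eq_add_of_windowsAgree hX (by omega) (by omega) hagree'

theorem stmt_1 (X : Finset ℕ) (hpos : ∀ x ∈ X, 0 < x)
    (G : ℕ → ℕ) (hG : IsGrundy (↑X) G) :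
    ∃ n₀ p s : ℕ, 0 < p ∧ ∀ n, n₀ ≤ n → G (n + p) = G n + s :=
  stmt_1_general X G hG
end

section
/- Let a < b be positive integers with b ≠ 2a, and let X = {a, b, a+b}. Then for every k ∈ ℕ, the Grundy value k is attained at exactly three pile sizes, and if n is the smallest pile with G(n) = k, then either G(n+a) = G(n+a+b) = k, or else G(n+b) = G(n+a+b) = k. -/
/-!
The level sets of `G` are the blocks `{n, n + x, n + a + b}` of a greedy partition of `ℕ`: `n`
is the least number not in an earlier block, and `x = a` unless `n + a` is already taken, in which
case `x = b`. Differences inside a block lie in `{a, b, a + b}`, so no move stays in a block; and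
from any element `m` of block `k` one can move to every earlier block `v`: to its least element
`n`, or, if `m - n = b`, to `n + a`, at distance `b - a ∉ {a, b, a + b}` because `b ≠ 2a` (the
distances `a` and `a + b` are excluded because `n + a` and `n + a + b` lie in blocks `≤ v`).
Strong induction then identifies `G` with the block index.
-/

theorem mex_eq {S : Set ℕ} {k : ℕ} (hlt : ∀ v < k, v ∈ S) (hk : k ∉ S) : mex S = k :=
  le_antisymm (Nat.sInf_le hk) (le_csInf ⟨k, hk⟩ fun _ hm => not_lt.1 fun h => hm (hlt _ h))

namespace AllButGame

def triple (a b n x : ℕ) : Set ℕ := {n, n + x, n + a + b}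

open scoped Classical in
noncomputable def greedy (a b k : ℕ) : ℕ × ℕ :=
  -- `prev` keeps the proof of `j < k` in scope, for the termination check
  let prev := fun j (_ : j < k) => greedy a b j
  let covered := fun i => ∃ j, ∃ hj : j < k, i ∈ triple a b (prev j hj).1 (prev j hj).2
  let n := sInf {i | ¬ covered i}
  (n, if covered (n + a) then b else a)
termination_by k

noncomputable def start (a b k : ℕ) : ℕ := (greedy a b k).1

noncomputable def gap (a b k : ℕ) : ℕ := (greedy a b k).2

def block (a b k : ℕ) : Set ℕ := triple a b (start a b k) (gap a b k)

open scoped Classical in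
theorem greedy_eq (a b k : ℕ) : greedy a b k =
    (sInf {i | ∀ j < k, i ∉ block a b j},
      if ∃ j < k, sInf {i | ∀ j < k, i ∉ block a b j} + a ∈ block a b j then b else a) := by
  rw [greedy.eq_1]
  simp only [block, start, gap, not_exists, exists_prop, not_and]
  congr

theorem start_eq (a b k : ℕ) : start a b k = sInf {i | ∀ j < k, i ∉ block a b j} := by
  rw [start, greedy_eq]

open scoped Classical in
theorem gap_eq (a b k : ℕ) :
    gap a b k = if ∃ j < k, start a b k + a ∈ block a b j then b else a := by
  rw [gap, greedy_eq, start_eq]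

theorem gap_eq_a_or_b (a b k : ℕ) : gap a b k = a ∨ gap a b k = b := by
  rw [gap_eq]
  split_ifs <;> simp

theorem mem_block {a b k i : ℕ} :
    i ∈ block a b k ↔ i = start a b k ∨ i = start a b k + gap a b k ∨ i = start a b k + a + b :=
  Iff.rfl

theorem start_mem_block (a b k : ℕ) : start a b k ∈ block a b k := Or.inl rfl

theorem start_add_gap_mem_block (a b k : ℕ) : start a b k + gap a b k ∈ block a b k :=
  Or.inr (Or.inl rfl)

theorem start_add_add_mem_block (a b k : ℕ) : start a b k + a + b ∈ block a b k :=
  Or.inr (Or.inr rfl)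

theorem le_of_mem_block {a b k i : ℕ} (hi : i ∈ block a b k) :
    start a b k ≤ i ∧ i ≤ start a b k + a + b := by
  rcases mem_block.1 hi with h | h | h <;> rcases gap_eq_a_or_b a b k with hg | hg <;> omega

theorem nonempty_uncovered (a b k : ℕ) : {i | ∀ j < k, i ∉ block a b j}.Nonempty := by
  refine ⟨(Finset.range k).sup (fun j => start a b j + a + b) + 1, fun j hj hmem => ?_⟩
  have hle : start a b j + a + b ≤ (Finset.range k).sup (fun j => start a b j + a + b) :=
    Finset.le_sup (f := fun j => start a b j + a + b) (Finset.mem_range.2 hj)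
  have := (le_of_mem_block hmem).2
  omega

theorem start_not_mem_block {a b j k : ℕ} (hjk : j < k) : start a b k ∉ block a b j := by
  have := Nat.sInf_mem (nonempty_uncovered a b k)
  rw [← start_eq] at this
  exact this j hjk

theorem start_le_of_forall_not_mem_block {a b k i : ℕ} (hi : ∀ j < k, i ∉ block a b j) :
    start a b k ≤ i := by
  rw [start_eq]
  exact Nat.sInf_le hi

theorem exists_lt_mem_block_of_lt_start {a b k i : ℕ} (hi : i < start a b k) :
    ∃ j < k, i ∈ block a b j := by
  by_contra! h
  exact absurd (start_le_of_forall_not_mem_block h) (not_le.2 hi)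

theorem strictMono_start (a b : ℕ) : StrictMono (start a b) := by
  intro j k hjk
  have hle : start a b j ≤ start a b k :=
    start_le_of_forall_not_mem_block fun i hij => start_not_mem_block (hij.trans hjk)
  have hne : start a b j ≠ start a b k := fun h =>
    start_not_mem_block hjk (h ▸ start_mem_block a b j)
  omega

theorem exists_le_start_add_mem_block (a b k : ℕ) : ∃ j ≤ k, start a b k + a ∈ block a b j := by
  by_cases h : ∃ j < k, start a b k + a ∈ block a b j
  · obtain ⟨j, hjk, hj⟩ := h
    exact ⟨j, hjk.le, hj⟩
  · have hg : gap a b k = a := by rw [gap_eq, if_neg h]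
    have := start_add_gap_mem_block a b k
    rw [hg] at this
    exact ⟨k, le_rfl, this⟩

theorem not_mem_block_of_lt {a b j k i : ℕ} (hab : a ≤ b) (hjk : j < k)
    (hi : i ∈ block a b k) : i ∉ block a b j := by
  have hstart := strictMono_start a b hjk
  intro hij
  rcases mem_block.1 hi with rfl | rfl | rfl
  · exact start_not_mem_block hjk hij
  · by_cases hcov : ∃ j < k, start a b k + a ∈ block a b j
    · have hg : gap a b k = b := by rw [gap_eq, if_pos hcov]
      rw [hg] at hij
      rcases mem_block.1 hij with h | h | h
      · omega
      · rcases gap_eq_a_or_b a b j with hgj | hgj <;> omega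
      · obtain ⟨l, hlj, hl⟩ := exists_le_start_add_mem_block a b j
        rw [show start a b j + a = start a b k by omega] at hl
        exact start_not_mem_block (hlj.trans_lt hjk) hl
    · have hg : gap a b k = a := by rw [gap_eq, if_neg hcov]
      rw [hg] at hij
      exact hcov ⟨j, hjk, hij⟩
  · have := (le_of_mem_block hij).2
    omega

theorem exists_mem_block (a b m : ℕ) : ∃ k, m ∈ block a b k := by
  have hm : m < start a b (m + 1) :=
    Nat.lt_of_lt_of_le m.lt_succ_self ((strictMono_start a b).id_le (m + 1))
  obtain ⟨k, -, hk⟩ := exists_lt_mem_block_of_lt_start hm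
  exact ⟨k, hk⟩

theorem sub_mem_of_mem_block {a b k i m : ℕ} (hi : i ∈ block a b k) (hm : m ∈ block a b k)
    (him : i < m) : m - i ∈ ({a, b, a + b} : Set ℕ) := by
  simp only [Set.mem_insert_iff, Set.mem_singleton_iff]
  rcases mem_block.1 hi with h | h | h <;> rcases mem_block.1 hm with h' | h' | h' <;>
    rcases gap_eq_a_or_b a b k with hg | hg <;> omega

theorem exists_mem_block_sub_not_mem {a b v k m : ℕ} (ha : 0 < a) (hab : a < b)
    (hb : b ≠ 2 * a) (hvk : v < k) (hm : m ∈ block a b k) :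
    ∃ j ∈ block a b v, j < m ∧ m - j ∉ ({a, b, a + b} : Set ℕ) := by
  have hlt : start a b v < m := (strictMono_start a b hvk).trans_le (le_of_mem_block hm).1
  have hm_v : m ∉ block a b v := not_mem_block_of_lt hab.le hvk hm
  by_cases hX : m - start a b v ∈ ({a, b, a + b} : Set ℕ)
  swap
  · exact ⟨_, start_mem_block a b v, hlt, hX⟩
  simp only [Set.mem_insert_iff, Set.mem_singleton_iff] at hX ⊢
  rcases hX with hX | hX | hX
  · obtain ⟨l, hlv, hl⟩ := exists_le_start_add_mem_block a b v
    rw [show start a b v + a = m by omega] at hl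
    exact absurd hl (not_mem_block_of_lt hab.le (hlv.trans_lt hvk) hm)
  · rcases gap_eq_a_or_b a b v with hg | hg
    · exact ⟨_, start_add_gap_mem_block a b v, by omega, by omega⟩
    · exact absurd (show m ∈ block a b v by rw [mem_block]; omega) hm_v
  · exact absurd (show m ∈ block a b v by rw [mem_block]; omega) hm_v

theorem grundy_eq_of_mem_block {a b : ℕ} {G : ℕ → ℕ} (ha : 0 < a) (hab : a < b)
    (hb : b ≠ 2 * a) (hG : IsGrundy {a, b, a + b} G) {m k : ℕ} (hm : m ∈ block a b k) :
    G m = k := by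
  induction m using Nat.strong_induction_on generalizing k with
  | _ m ih =>
  rw [hG m]
  apply mex_eq
  · intro v hvk
    obtain ⟨j, hj, hjm, hX⟩ := exists_mem_block_sub_not_mem ha hab hb hvk hm
    refine ⟨m - j, Nat.sub_pos_of_lt hjm, hX, Nat.sub_le m j, ?_⟩
    rw [Nat.sub_sub_self hjm.le]
    exact ih j hjm hj
  · rintro ⟨t, ht, htX, htm, hGt⟩
    obtain ⟨l, hl⟩ := exists_mem_block a b (m - t)
    have hlt : m - t < m := by omega
    obtain rfl : l = k := hGt ▸ (ih _ hlt hl).symm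
    apply htX
    simpa [Nat.sub_sub_self htm] using sub_mem_of_mem_block hl hm hlt

theorem grundy_eq_iff_mem_block {a b : ℕ} {G : ℕ → ℕ} (ha : 0 < a) (hab : a < b)
    (hb : b ≠ 2 * a) (hG : IsGrundy {a, b, a + b} G) {i k : ℕ} : G i = k ↔ i ∈ block a b k := by
  refine ⟨fun h => ?_, grundy_eq_of_mem_block ha hab hb hG⟩
  obtain ⟨l, hl⟩ := exists_mem_block a b i
  rwa [← h, grundy_eq_of_mem_block ha hab hb hG hl]

theorem ncard_block {a b : ℕ} (ha : 0 < a) (hb : 0 < b) (k : ℕ) : (block a b k).ncard = 3 := by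
  rw [block, triple, Set.ncard_eq_three]
  rcases gap_eq_a_or_b a b k with hg | hg <;> exact ⟨_, _, _, by omega, by omega, by omega, rfl⟩

theorem sInf_block (a b k : ℕ) : sInf (block a b k) = start a b k :=
  le_antisymm (Nat.sInf_le (start_mem_block a b k))
    (le_csInf ⟨_, start_mem_block a b k⟩ fun _ hi => (le_of_mem_block hi).1)

end AllButGame

open AllButGame in
theorem stmt_2 (a b : ℕ) (ha : 0 < a) (hab : a < b) (hb : b ≠ 2 * a)
    (G : ℕ → ℕ) (hG : IsGrundy {a, b, a + b} G) (k : ℕ) :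
    {i | G i = k}.ncard = 3 ∧
    (G (sInf {i | G i = k} + a) = k ∧ G (sInf {i | G i = k} + a + b) = k ∨
     G (sInf {i | G i = k} + b) = k ∧ G (sInf {i | G i = k} + a + b) = k) := by
  have hlevel : {i | G i = k} = block a b k :=
    Set.ext fun _ => grundy_eq_iff_mem_block ha hab hb hG
  rw [hlevel, sInf_block]
  refine ⟨ncard_block ha (ha.trans hab) k, ?_⟩
  simp only [grundy_eq_iff_mem_block ha hab hb hG]
  have hgap := start_add_gap_mem_block a b k
  rcases gap_eq_a_or_b a b k with hg | hg <;> rw [hg] at hgap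
  · exact .inl ⟨hgap, start_add_add_mem_block a b k⟩
  · exact .inr ⟨hgap, start_add_add_mem_block a b k⟩
end

section
/- Let a < b be positive integers with b ≠ 2a and X = {a, b, a+b}. Then the Grundy sequence of the all-but subtraction game with excluded set X is purely arithmetic periodic: there exist p > 0 and s ∈ ℕ such that for all n ∈ ℕ, G(n + p) = G(n) + s. -/
theorem mex_eq_of_forall_lt_mem {S : Set ℕ} {c : ℕ} (hc : c ∉ S) (h : ∀ v < c, v ∈ S) :
    mex S = c :=
  le_antisymm (Nat.sInf_le hc) (le_csInf ⟨c, hc⟩ fun _ hm => not_lt.1 fun hlt => hm (h _ hlt))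

theorem Nat.exists_count_eq_of_lt_count {p : ℕ → Prop} [DecidablePred p] {v n : ℕ}
    (h : v < count p n) : ∃ x < n, p x ∧ count p x = v := by
  have hv : ∀ hf : (Set.ofPred p).Finite, v < hf.toFinset.card :=
    fun hf => h.trans_le (count_le_card hf n)
  exact ⟨nth p v, nth_lt_of_lt_count h, nth_mem v hv, count_nth hv⟩

theorem Nat.count_add_period {p : ℕ → Prop} [DecidablePred p] {q : ℕ}
    (hp : Function.Periodic p q) (n : ℕ) : count p (n + q) = count p n + count p q := by
  induction n with
  | zero => simp
  | succ n ih => simp only [add_right_comm n 1 q, count_succ, ih, hp n]; ring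

theorem Function.exists_periodic_of_window {α : Type*} [Finite α] (f : ℕ → α) (L : ℕ)
    (hfwd : ∀ m n, (∀ k < L, f (m + k) = f (n + k)) → f (m + L) = f (n + L))
    (hbwd : ∀ m n, (∀ k, 0 < k → k ≤ L → f (m + k) = f (n + k)) → f m = f n) :
    ∃ q, 0 < q ∧ Periodic f q := by
  let Agree (m n : ℕ) : Prop := ∀ k < L, f (m + k) = f (n + k)
  have agree_succ {m n} (h : Agree m n) : Agree (m + 1) (n + 1) := by
    intro k hk
    rw [add_assoc, add_assoc, add_comm 1 k]
    rcases Nat.lt_or_ge (k + 1) L with hk' | hk'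
    · exact h (k + 1) hk'
    · obtain rfl : k + 1 = L := by omega
      exact hfwd m n h
  have eq_of_agree_succ {m n} (h : Agree (m + 1) (n + 1)) : f m = f n :=
    hbwd m n fun k hk hkL => by
      simpa only [add_assoc, Nat.add_sub_cancel' hk] using h (k - 1) (by omega)
  have agree_of_succ {m n} (h : Agree (m + 1) (n + 1)) : Agree m n := by
    intro k hk
    rcases k with _ | k
    · simpa using eq_of_agree_succ h
    · convert h k (by omega) using 2 <;> omega
  obtain ⟨i, j, hij, hw⟩ := Finite.exists_ne_map_eq_of_infinite
    fun n (k : Fin L) => f (n + k)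
  have agree_ij : Agree i j := fun k hk => congrFun hw ⟨k, hk⟩
  have agree_zero : ∀ {i j}, i < j → Agree i j → Agree 0 (j - i) := by
    intro i
    induction i with
    | zero => simp
    | succ i ih =>
      intro j hij h
      obtain ⟨j, rfl⟩ : ∃ j', j = j' + 1 := ⟨j - 1, by omega⟩
      simpa using ih (by omega) (agree_of_succ h)
  have agree_shift {q} (h : Agree 0 q) (n : ℕ) : Agree n (n + q) := by
    induction n with
    | zero => simpa using h
    | succ n ih => simpa only [add_right_comm n q 1] using agree_succ ih
  have exists_agree : ∃ q, 0 < q ∧ Agree 0 q := by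
    rcases Nat.lt_or_gt_of_ne hij with hlt | hlt
    · exact ⟨j - i, by omega, agree_zero hlt agree_ij⟩
    · exact ⟨i - j, by omega, agree_zero hlt fun k hk => (agree_ij k hk).symm⟩
  obtain ⟨q, hq, h0q⟩ := exists_agree
  refine ⟨q, hq, fun n => (eq_of_agree_succ ?_).symm⟩
  simpa only [add_right_comm n q 1] using agree_shift h0q (n + 1)

inductive Role
  | root | plusA | plusB | plusAB
  deriving DecidableEq

instance : Fintype Role :=
  ⟨{.root, .plusA, .plusB, .plusAB}, fun r => by cases r <;> simp⟩

def Role.shift (a b : ℕ) : Role → ℕ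
  | root => 0
  | plusA => a
  | plusB => b
  | plusAB => a + b

section Role

variable {a b : ℕ}

/-- `n = x + (role n).shift a b` with `x` the least element of the Grundy class of `n`. A root `x`
always absorbs `x + (a + b)`, absorbs `x + b` unless that is taken or `x + a` is in its class, and
absorbs `x + a` unless that is taken. -/
def role (ha : 0 < a) (hab : a < b) : ℕ → Role
  | 0 => .root
  | n + 1 =>
    if a + b ≤ n + 1 ∧ role ha hab (n + 1 - (a + b)) = .root then .plusAB
    else if b ≤ n + 1 ∧ role ha hab (n + 1 - b) = .root ∧
        role ha hab (n + 1 - (b - a)) ≠ .plusA then .plusB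
    else if a ≤ n + 1 ∧ role ha hab (n + 1 - a) = .root then .plusA
    else .root
decreasing_by all_goals omega

variable (ha : 0 < a) (hab : a < b)

theorem role_eq (n : ℕ) :
    role ha hab n =
      if a + b ≤ n ∧ role ha hab (n - (a + b)) = .root then .plusAB
      else if b ≤ n ∧ role ha hab (n - b) = .root ∧ role ha hab (n - (b - a)) ≠ .plusA then .plusB
      else if a ≤ n ∧ role ha hab (n - a) = .root then .plusA
      else .root := by
  rcases n with _ | n
  · simp [role, ha.ne', Nat.pos_iff_ne_zero.mp (ha.trans hab)]
  · rw [role]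

theorem role_eq_plusAB_iff (n : ℕ) :
    role ha hab n = .plusAB ↔ a + b ≤ n ∧ role ha hab (n - (a + b)) = .root := by
  rw [role_eq]; split_ifs <;> simp_all

theorem role_add_add_eq_plusAB_iff (x : ℕ) :
    role ha hab (x + (a + b)) = .plusAB ↔ role ha hab x = .root := by
  simp [role_eq_plusAB_iff]

theorem shift_role_le_and_role_sub (n : ℕ) :
    (role ha hab n).shift a b ≤ n ∧ role ha hab (n - (role ha hab n).shift a b) = .root := by
  have h := role_eq ha hab n
  split_ifs at h <;> simp_all [Role.shift]

theorem role_sub_sub_ne_plusA {n : ℕ} (h : role ha hab n = .plusB) :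
    role ha hab (n - (b - a)) ≠ .plusA := by
  rw [role_eq] at h
  split_ifs at h with h₁ h₂
  exact h₂.2.2

theorem role_add_ne_root {x : ℕ} (hx : role ha hab x = .root) : role ha hab (x + a) ≠ .root := by
  rw [role_eq]
  split_ifs with h <;> simp_all

theorem role_add_eq_plusB {x : ℕ} (hx : role ha hab x = .root) (hxa : role ha hab (x + a) ≠ .plusA) :
    role ha hab (x + b) = .plusB := by
  have not_plusAB : ¬(a + b ≤ x + b ∧ role ha hab (x + b - (a + b)) = .root) := by
    rintro ⟨hle, hroot⟩
    refine role_add_ne_root ha hab hroot ?_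
    rwa [show x + b - (a + b) + a = x by omega]
  rw [role_eq, if_neg not_plusAB, if_pos]
  refine ⟨by omega, by simpa using hx, ?_⟩
  rwa [show x + b - (b - a) = x + a by omega]

theorem role_add_sub_eq_plusB {m : ℕ} (hm : role ha hab m ≠ .plusA)
    (h : role ha hab (m + b) = .plusAB) : role ha hab (m + (b - a)) = .plusB := by
  obtain ⟨hle, hroot⟩ := (role_eq_plusAB_iff ha hab _).1 h
  rw [show m + b - (a + b) = m - a by omega] at hroot
  have := role_add_eq_plusB ha hab hroot (by rwa [Nat.sub_add_cancel (by omega)])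
  rwa [show m - a + b = m + (b - a) by omega] at this

theorem role_eq_backward (m : ℕ) :
    role ha hab m =
      if role ha hab (m + (a + b)) = .plusAB then .root
      else if role ha hab (m + b) = .plusAB ∧ role ha hab (m + (b - a)) ≠ .plusB then .plusA
      else if role ha hab (m + a) = .plusAB then .plusB
      else .plusAB := by
  obtain ⟨hle, hroot⟩ := shift_role_le_and_role_sub ha hab m
  simp only [role_add_add_eq_plusAB_iff]
  cases hm : role ha hab m with
  | root => rfl
  | plusA =>
    simp only [hm, Role.shift] at hle hroot
    have hplusB : role ha hab (m + b) = .plusAB := by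
      rw [role_eq_plusAB_iff, show m + b - (a + b) = m - a by omega]
      exact ⟨by omega, hroot⟩
    have hne : role ha hab (m + (b - a)) ≠ .plusB := fun h => by
      simpa [hm] using role_sub_sub_ne_plusA ha hab h
    simp [hplusB, hne]
  | plusB =>
    simp only [hm, Role.shift] at hle hroot
    have hplusAB : role ha hab (m + a) = .plusAB := by
      rw [role_eq_plusAB_iff, show m + a - (a + b) = m - b by omega]
      exact ⟨by omega, hroot⟩
    simpa [hplusAB] using role_add_sub_eq_plusB ha hab (m := m) (by simp [hm])
  | plusAB =>
    simp only [hm, Role.shift] at hle hroot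
    have hne : role ha hab (m + a) ≠ .plusAB := fun h => by
      rw [role_eq_plusAB_iff, show m + a - (a + b) = m - (a + b) + a by omega] at h
      exact role_add_ne_root ha hab hroot h.2
    simpa [hne] using role_add_sub_eq_plusB ha hab (m := m) (by simp [hm])

theorem role_add_add (m : ℕ) :
    role ha hab (m + (a + b)) =
      if role ha hab m = .root then .plusAB
      else if role ha hab (m + a) = .root ∧ role ha hab (m + 2 * a) ≠ .plusA then .plusB
      else if role ha hab (m + b) = .root then .plusA
      else .root := by
  rw [role_eq, show m + (a + b) - (a + b) = m by omega, show m + (a + b) - b = m + a by omega,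
    show m + (a + b) - (b - a) = m + 2 * a by omega, show m + (a + b) - a = m + b by omega]
  simp only [show a + b ≤ m + (a + b) by omega, show b ≤ m + (a + b) by omega,
    show a ≤ m + (a + b) by omega, true_and]

theorem exists_periodic_role : ∃ q, 0 < q ∧ Function.Periodic (role ha hab) q := by
  refine Function.exists_periodic_of_window _ (a + b) (fun m n h => ?_) (fun m n h => ?_)
  · have h0 : role ha hab m = role ha hab n := by simpa using h 0 (by omega)
    rw [role_add_add, role_add_add, h0, h (2 * a) (by omega), h a (by omega), h b (by omega)]
  · rw [role_eq_backward ha hab m, role_eq_backward ha hab n, h (a + b) (by omega) le_rfl,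
      h a ha (by omega), h b (by omega) (by omega), h (b - a) (by omega) (by omega)]

end Role

section Root

variable {a b : ℕ} (ha : 0 < a) (hab : a < b)

def root (n : ℕ) : ℕ := n - (role ha hab n).shift a b

def grundyValue (n : ℕ) : ℕ := Nat.count (role ha hab · = .root) (root ha hab n)

theorem role_root (n : ℕ) : role ha hab (root ha hab n) = .root :=
  (shift_role_le_and_role_sub ha hab n).2

theorem root_add_shift (n : ℕ) : root ha hab n + (role ha hab n).shift a b = n :=
  Nat.sub_add_cancel (shift_role_le_and_role_sub ha hab n).1

theorem root_eq_self {x : ℕ} (hx : role ha hab x = .root) : root ha hab x = x := by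
  simp [root, hx, Role.shift]

theorem root_add_le {n : ℕ} (hn : role ha hab n ≠ .root) : root ha hab n + a ≤ n := by
  have := root_add_shift ha hab n
  cases h : role ha hab n
  · exact absurd h hn
  all_goals simp only [h, Role.shift] at this; omega

theorem sub_mem_of_root_eq {m n : ℕ} (hmn : m < n) (h : root ha hab m = root ha hab n) :
    n - m ∈ ({a, b, a + b} : Set ℕ) := by
  have hm := root_add_shift ha hab m
  have hn := root_add_shift ha hab n
  rw [h] at hm
  simp only [Set.mem_insert_iff, Set.mem_singleton_iff]
  cases hrm : role ha hab m <;> cases hrn : role ha hab n <;>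
    simp only [hrm, hrn, Role.shift] at hm hn <;> try omega
  exact absurd (by rwa [show n - (b - a) = m by omega]) (role_sub_sub_ne_plusA ha hab hrn)

theorem exists_sub_notMem_root_eq (hb : b ≠ 2 * a) {x n : ℕ} (hx : role ha hab x = .root)
    (hxn : x < root ha hab n) :
    ∃ m < n, n - m ∉ ({a, b, a + b} : Set ℕ) ∧ root ha hab m = x := by
  have hn : root ha hab n ≤ n := Nat.sub_le _ _
  obtain ⟨d, rfl⟩ : ∃ d, n = x + d := ⟨n - x, by omega⟩
  simp only [Set.mem_insert_iff, Set.mem_singleton_iff, not_or]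
  by_cases hda : d = a
  · subst d
    have := root_add_le ha hab (role_add_ne_root ha hab hx)
    omega
  by_cases hdab : d = a + b
  · subst d
    have := root_add_shift ha hab (x + (a + b))
    rw [(role_add_add_eq_plusAB_iff ha hab x).2 hx, Role.shift] at this
    omega
  by_cases hdb : d = b
  · subst d
    by_cases hxa : role ha hab (x + a) = .plusA
    · refine ⟨x + a, by omega, by omega, ?_⟩
      have := root_add_shift ha hab (x + a)
      rw [hxa, Role.shift] at this
      omega
    · have := root_add_shift ha hab (x + b)
      rw [role_add_eq_plusB ha hab hx hxa, Role.shift] at this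
      omega
  exact ⟨x, by omega, by omega, root_eq_self ha hab hx⟩

theorem grundyValue_add_period {q : ℕ} (hq : Function.Periodic (role ha hab) q) (n : ℕ) :
    grundyValue ha hab (n + q) = grundyValue ha hab n + Nat.count (role ha hab · = .root) q := by
  have hroot : root ha hab (n + q) = root ha hab n + q := by
    have := (shift_role_le_and_role_sub ha hab n).1
    simp only [root, hq n]
    omega
  rw [grundyValue, hroot, Nat.count_add_period (fun k => by simp only [hq k]), grundyValue]

theorem IsGrundy.eq_grundyValue (hb : b ≠ 2 * a) {G : ℕ → ℕ} (hG : IsGrundy {a, b, a + b} G)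
    (n : ℕ) : G n = grundyValue ha hab n := by
  induction n using Nat.strong_induction_on with
  | _ n ih =>
    rw [hG n]
    apply mex_eq_of_forall_lt_mem
    · rintro ⟨t, ht, htX, htn, hval⟩
      rw [ih (n - t) (by omega)] at hval
      have := sub_mem_of_root_eq ha hab (m := n - t) (by omega)
        (Nat.count_injective (role_root ha hab _) (role_root ha hab _) hval)
      rw [Nat.sub_sub_self htn] at this
      exact htX this
    · intro v hv
      obtain ⟨x, hxn, hx, rfl⟩ := Nat.exists_count_eq_of_lt_count hv
      obtain ⟨m, hmn, hX, rfl⟩ := exists_sub_notMem_root_eq ha hab hb hx hxn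
      refine ⟨n - m, by omega, hX, by omega, ?_⟩
      rw [Nat.sub_sub_self hmn.le, ih m hmn, grundyValue]

end Root

theorem stmt_3 (a b : ℕ) (ha : 0 < a) (hab : a < b) (hb : b ≠ 2 * a)
    (G : ℕ → ℕ) (hG : IsGrundy {a, b, a + b} G) :
    ∃ p s : ℕ, 0 < p ∧ ∀ n, G (n + p) = G n + s := by
  obtain ⟨q, hq, hper⟩ := exists_periodic_role ha hab
  refine ⟨q, Nat.count (role ha hab · = .root) q, hq, fun n => ?_⟩
  rw [hG.eq_grundyValue ha hab hb, hG.eq_grundyValue ha hab hb, grundyValue_add_period ha hab hper]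
end

section
/- Let a, b, c be distinct positive integers with c > a, c > b, c ≠ a + b, c ≠ 2a, and c ≠ 2b. Then the Grundy sequence of the all-but subtraction game with excluded set {a, b, c} equals (pointwise) the Grundy sequence with excluded set {a, b}. -/
lemma mex_eq_s6 {S : Set ℕ} {v : ℕ} (h1 : v ∉ S) (h2 : ∀ w, w < v → w ∈ S) : mex S = v := by
  unfold mex
  refine le_antisymm (Nat.sInf_le h1) ?_
  refine le_csInf ⟨v, h1⟩ ?_
  intro w hw
  by_contra h
  push_neg at h
  exact hw (h2 w h)

/-- The period parameter. -/
def pp (a b : ℕ) : ℕ := if b = 2*a then 3*a else 2*a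

/-- Closed form for the Grundy sequence of the all-but-{a,b} game (a < b). -/
def gg (a b n : ℕ) : ℕ := a * (n / pp a b) + n % a

lemma pp_cases (a b : ℕ) : (b = 2*a ∧ pp a b = 3*a) ∨ (b ≠ 2*a ∧ pp a b = 2*a) := by
  unfold pp; split <;> simp_all

lemma pp_dvd (a b : ℕ) : a ∣ pp a b := by
  rcases pp_cases a b with ⟨_, h⟩ | ⟨_, h⟩ <;> rw [h] <;> [exact ⟨3, by ring⟩; exact ⟨2, by ring⟩]

lemma pp_two_le {a : ℕ} (b : ℕ) (ha : 0 < a) : 2*a ≤ pp a b := by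
  rcases pp_cases a b with ⟨_, h⟩ | ⟨_, h⟩ <;> omega

lemma gg_formula {a : ℕ} (b : ℕ) (ha : 0 < a) {q j r : ℕ} (hr : r < a)
    (hlt : a*j + r < pp a b) : gg a b (pp a b * q + (a*j + r)) = a*q + r := by
  obtain ⟨e, he⟩ := pp_dvd a b
  have hppos : 0 < pp a b := by have := pp_two_le b ha; omega
  unfold gg
  have h1 : (pp a b * q + (a*j+r)) / pp a b = q := by
    rw [add_comm, Nat.add_mul_div_left _ _ hppos, Nat.div_eq_of_lt hlt, zero_add]
  have h2 : (pp a b * q + (a*j+r)) % a = r := by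
    have : pp a b * q + (a*j+r) = a * (e*q + j) + r := by rw [he]; ring
    rw [this, Nat.mul_add_mod, Nat.mod_eq_of_lt hr]
  rw [h1, h2]

lemma gg_decomp {a : ℕ} (b : ℕ) (ha : 0 < a) (n : ℕ) :
    ∃ q j r, r < a ∧ a*j + r < pp a b ∧ n = pp a b * q + (a*j + r) ∧
      gg a b n = a*q + r := by
  have hppos : 0 < pp a b := by have := pp_two_le b ha; omega
  refine ⟨n / pp a b, n % pp a b / a, n % pp a b % a, Nat.mod_lt _ ha, ?_, ?_, ?_⟩
  · have h := Nat.div_add_mod (n % pp a b) a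
    have := Nat.mod_lt n hppos
    omega
  · have h := Nat.div_add_mod (n % pp a b) a
    have h2 := Nat.div_add_mod n (pp a b)
    omega
  · unfold gg
    rw [Nat.mod_mod_of_dvd n (pp_dvd a b)]

lemma val_unique {a q r q' r' : ℕ} (hr : r < a) (hr' : r' < a)
    (h : a*q + r = a*q' + r') : q = q' ∧ r = r' := by
  have e1 : ∀ x y, y < a → (a*x + y)/a = x := by
    intro x y hy
    rw [add_comm, Nat.add_mul_div_left _ _ (by omega : 0 < a), Nat.div_eq_of_lt hy, zero_add]
  have hq : q = q' := by rw [← e1 q r hr, ← e1 q' r' hr', h]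
  subst hq
  omega

/-- The Grundy sequence of the all-but-{a,b} game equals the closed form. -/
lemma G2_eq_gg {a b : ℕ} (ha : 0 < a) (hab : a < b) {G : ℕ → ℕ}
    (hG : IsGrundy {a, b} G) : ∀ n, G n = gg a b n := by
  intro n
  induction n using Nat.strong_induction_on with
  | _ n ih =>
  rw [hG n]
  apply mex_eq_s6
  · -- gg a b n is not among the reachable values
    rintro ⟨t, ht0, htab, htn, hval⟩
    simp only [Set.mem_insert_iff, Set.mem_singleton_iff, not_or] at htab
    rw [ih (n - t) (by omega)] at hval
    obtain ⟨q, j, r, hr, hjr, hn, hgn⟩ := gg_decomp b ha n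
    obtain ⟨q2, j2, r2, hr2, hjr2, hm, hgm⟩ := gg_decomp b ha (n - t)
    rw [hgm, hgn] at hval
    obtain ⟨hqq, hrr⟩ := val_unique hr2 hr hval
    subst hqq; subst hrr
    -- now n - t and n are in the same block; t is a positive multiple of a below pp
    have hjj : a * j2 + t = a * j := by omega
    have hd : ∃ d, 0 < d ∧ t = a * d := by
      refine ⟨j - j2, ?_, ?_⟩
      · rcases Nat.lt_or_ge j2 j with h | h
        · omega
        · have : a * j ≤ a * j2 := Nat.mul_le_mul_left a h
          omega
      · have hj2j : j2 ≤ j := by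
          rcases Nat.lt_or_ge j j2 with h | h
          · have : a * j2 ≥ a * (j+1) := Nat.mul_le_mul_left a h
            have : a * (j+1) = a*j + a := by ring
            omega
          · exact h
        have : a * (j - j2) + a * j2 = a * j := by
          rw [← Nat.mul_add]; congr 1; omega
        omega
    obtain ⟨d, hd0, hdt⟩ := hd
    rcases pp_cases a b with ⟨hb2, hpval⟩ | ⟨hb2, hpval⟩
    · have hdlt : d < 3 := by
        have : a * d < a * 3 := by omega
        exact Nat.lt_of_mul_lt_mul_left this
      interval_cases d <;> omega
    · have hdlt : d < 2 := by
        have : a * d < a * 2 := by omega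
        exact Nat.lt_of_mul_lt_mul_left this
      interval_cases d <;> omega
  · intro w hw
    obtain ⟨q, j, r, hr, hjr, hn, hgn⟩ := gg_decomp b ha n
    rw [hgn] at hw
    have hp2 := pp_two_le b ha
    set q' := w / a with hq'def
    set r' := w % a with hr'def
    have hw' : a * q' + r' = w := Nat.div_add_mod w a
    have hr' : r' < a := Nat.mod_lt _ ha
    have hq'le : q' ≤ q := by
      rcases Nat.lt_or_ge q q' with h | h
      · have h1 : a * (q+1) ≤ a * q' := Nat.mul_le_mul_left a h
        have h2 : a * (q+1) = a*q + a := by ring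
        omega
      · exact h
    rcases eq_or_lt_of_le hq'le with hqeq | hqlt
    · -- same block: use t = r - r'
      have hweq : a * q + r' = w := by rw [← hqeq]; exact hw'
      have hrlt : r' < r := by omega
      refine ⟨r - r', by omega, ?_, by omega, ?_⟩
      · simp only [Set.mem_insert_iff, Set.mem_singleton_iff, not_or]
        omega
      · have hnt : n - (r - r') = pp a b * q + (a*j + r') := by omega
        rw [ih _ (by omega), hnt, gg_formula b ha hr' (by omega)]
        omega
    · -- earlier block
      have hmul : pp a b * (q'+1) ≤ pp a b * q := Nat.mul_le_mul_left _ hqlt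
      have hmul2 : pp a b * (q'+1) = pp a b * q' + pp a b := by ring
      have hg0 : gg a b (pp a b * q' + r') = a*q' + r' := by
        simpa using gg_formula b ha hr' (show a*0 + r' < pp a b by omega) (q := q')
      have hg1 : gg a b (pp a b * q' + (a + r')) = a*q' + r' := by
        simpa using gg_formula b ha hr' (show a*1 + r' < pp a b by omega) (q := q')
      by_cases hDb : n - (pp a b * q' + r') = b
      · rcases pp_cases a b with ⟨hb2, hpval⟩ | ⟨hb2, hpval⟩
        · omega
        · refine ⟨n - (pp a b * q' + (a + r')), by omega, ?_, by omega, ?_⟩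
          · simp only [Set.mem_insert_iff, Set.mem_singleton_iff, not_or]
            omega
          · have hback : n - (n - (pp a b * q' + (a + r'))) =
                pp a b * q' + (a + r') := by omega
            rw [ih _ (by omega), hback, hg1]
            omega
      · refine ⟨n - (pp a b * q' + r'), by omega, ?_, by omega, ?_⟩
        · simp only [Set.mem_insert_iff, Set.mem_singleton_iff, not_or]
          omega
        · have hback : n - (n - (pp a b * q' + r')) = pp a b * q' + r' := by omega
          rw [ih _ (by omega), hback, hg0]
          omega

/-- Every Grundy value of the all-but-{a,b} game recurs at distance `a`. -/
lemma gg_companion {a b : ℕ} (ha : 0 < a) (hab : a < b) (m : ℕ) :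
    gg a b (m + a) = gg a b m ∨ (a ≤ m ∧ gg a b (m - a) = gg a b m) := by
  have hp2 := pp_two_le b ha
  obtain ⟨q, j, r, hr, hjr, hm, hgm⟩ := gg_decomp b ha m
  by_cases h : a*(j+1) + r < pp a b
  · left
    have hmeq : m + a = pp a b * q + (a*(j+1) + r) := by
      rw [hm]; ring
    rw [hmeq, gg_formula b ha hr h, hgm]
  · right
    have hj : 1 ≤ j := by
      rcases Nat.eq_zero_or_pos j with h0 | h0
      · subst h0; omega
      · exact h0
    obtain ⟨j', rfl⟩ : ∃ j', j = j' + 1 := ⟨j - 1, by omega⟩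
    have ham : a ≤ m := by
      have : a * (j' + 1) = a * j' + a := by ring
      omega
    refine ⟨ham, ?_⟩
    have hsplit : a * (j' + 1) = a * j' + a := by ring
    have hmeq : m - a = pp a b * q + (a*j' + r) := by omega
    have hlt : a * j' + r < pp a b := by omega
    rw [hmeq, gg_formula b ha hr hlt, hgm]

lemma main_lt (a b c : ℕ) (ha : 0 < a) (hab : a < b)
    (hca : a < c) (hcb : b < c)
    (h1 : c ≠ a + b) (h2 : c ≠ 2 * a) (h3 : c ≠ 2 * b)
    (G₁ G₂ : ℕ → ℕ) (hG₁ : IsGrundy {a, b, c} G₁)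
    (hG₂ : IsGrundy {a, b} G₂) :
    ∀ n, G₁ n = G₂ n := by
  intro n
  induction n using Nat.strong_induction_on with
  | _ n ih =>
  rw [hG₁ n, hG₂ n]
  congr 1
  ext v
  simp only [Set.mem_setOf_eq, Set.mem_insert_iff, Set.mem_singleton_iff, not_or]
  constructor
  · rintro ⟨t, ht0, ⟨hta, htb, htc⟩, htn, hval⟩
    exact ⟨t, ht0, ⟨hta, htb⟩, htn, by rw [← ih (n - t) (by omega)]; exact hval⟩
  · rintro ⟨t, ht0, ⟨hta, htb⟩, htn, hval⟩
    rw [G2_eq_gg ha hab hG₂] at hval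
    by_cases htc : t = c
    · -- replace the move c by c - a or c + a
      rw [htc] at ht0 htn hval
      rcases gg_companion ha hab (n - c) with hcomp | ⟨hle, hcomp⟩
      · refine ⟨c - a, by omega, ⟨by omega, by omega, by omega⟩, by omega, ?_⟩
        rw [ih (n - (c - a)) (by omega), G2_eq_gg ha hab hG₂,
          show n - (c - a) = n - c + a by omega, hcomp]
        exact hval
      · refine ⟨c + a, by omega, ⟨by omega, by omega, by omega⟩, by omega, ?_⟩
        rw [ih (n - (c + a)) (by omega), G2_eq_gg ha hab hG₂,
          show n - (c + a) = n - c - a by omega, hcomp]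
        exact hval
    · exact ⟨t, ht0, ⟨hta, htb, htc⟩, htn,
        by rw [ih (n - t) (by omega), G2_eq_gg ha hab hG₂]; exact hval⟩

theorem stmt_6 (a b c : ℕ) (ha : 0 < a) (hb : 0 < b) (hab : a ≠ b)
    (hca : a < c) (hcb : b < c)
    (h1 : c ≠ a + b) (h2 : c ≠ 2 * a) (h3 : c ≠ 2 * b)
    (G₁ G₂ : ℕ → ℕ) (hG₁ : IsGrundy {a, b, c} G₁)
    (hG₂ : IsGrundy {a, b} G₂) :
    ∀ n, G₁ n = G₂ n := by
  rcases Nat.lt_or_ge a b with h | h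
  · exact main_lt a b c ha h hca hcb h1 h2 h3 G₁ G₂ hG₁ hG₂
  · have hba : b < a := by omega
    have e1 : ({a, b, c} : Set ℕ) = {b, a, c} := by
      ext x; simp; tauto
    have e2 : ({a, b} : Set ℕ) = {b, a} := by
      ext x; simp; tauto
    exact main_lt b a c hb hba hcb hca (by omega) h3 h2 G₁ G₂
      (e1 ▸ hG₁) (e2 ▸ hG₂)
end

section
/- For the all-but subtraction game with excluded set X = {a} (a a positive integer), the Grundy sequence satisfies G(n + 2a) = G(n) + a for all n ∈ ℕ; concretely, G is purely arithmetic periodic with period 2a and saltus a. -/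
/-!
Writing `n = a * k + s` with `s < a`, the Grundy value of `n` is `a * (k / 2) + s`.
From `n` every smaller position can be reached except `n - a`. The formula takes each value
below its value at `n` at some smaller position other than `n - a`, and among smaller positions
it repeats its value at `n` only at `n - a`, so the formula satisfies the mex recursion.
-/

lemma mex_eq_of_forall_lt_mem_s8 {S : Set ℕ} {k : ℕ} (hk : k ∉ S) (h : ∀ m < k, m ∈ S) :
    mex S = k :=
  le_antisymm (Nat.sInf_le hk) (le_csInf ⟨k, hk⟩ fun _ hm => not_lt.1 fun hmk => hm (h _ hmk))

namespace Nat

variable {a k l s t : ℕ}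

lemma exists_eq_mul_add (ha : 0 < a) (n : ℕ) : ∃ k s, s < a ∧ n = a * k + s :=
  ⟨n / a, n % a, Nat.mod_lt n ha, (Nat.div_add_mod n a).symm⟩

lemma mul_add_lt_mul_add_iff (hs : s < a) (ht : t < a) :
    a * k + s < a * l + t ↔ k < l ∨ k = l ∧ s < t := by
  constructor
  · intro h
    rcases lt_trichotomy k l with hkl | rfl | hlk
    · exact .inl hkl
    · exact .inr ⟨rfl, by omega⟩
    · have : a * (l + 1) ≤ a * k := Nat.mul_le_mul_left a hlk
      nlinarith
  · rintro (hkl | ⟨rfl, hst⟩)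
    · have : a * (k + 1) ≤ a * l := Nat.mul_le_mul_left a hkl
      nlinarith
    · omega

lemma mul_add_eq_mul_add_iff (hs : s < a) (ht : t < a) :
    a * k + s = a * l + t ↔ k = l ∧ s = t := by
  refine ⟨fun h => ?_, fun ⟨hkl, hst⟩ => hkl ▸ hst ▸ rfl⟩
  have hlt := mt (mul_add_lt_mul_add_iff hs ht).2 h.not_lt
  have hgt := mt (mul_add_lt_mul_add_iff ht hs).2 h.not_gt
  omega

end Nat

open Nat

def allButGrundy (a n : ℕ) : ℕ := a * (n / a / 2) + n % a

section allButGrundy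

variable {a k s m n v : ℕ}

lemma allButGrundy_mul_add (hs : s < a) : allButGrundy a (a * k + s) = a * (k / 2) + s := by
  rw [allButGrundy, Nat.mul_add_div (by omega), Nat.div_eq_of_lt hs, add_zero, Nat.mul_add_mod,
    Nat.mod_eq_of_lt hs]

lemma allButGrundy_add_two_mul (ha : 0 < a) (n : ℕ) :
    allButGrundy a (n + 2 * a) = allButGrundy a n + a := by
  obtain ⟨k, s, hs, rfl⟩ := exists_eq_mul_add ha n
  rw [show a * k + s + 2 * a = a * (k + 2) + s by ring, allButGrundy_mul_add hs,
    allButGrundy_mul_add hs, Nat.add_div_right k two_pos]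
  ring

lemma eq_add_of_allButGrundy_eq (ha : 0 < a) (hmn : m < n)
    (h : allButGrundy a m = allButGrundy a n) : n = m + a := by
  obtain ⟨k, s, hs, rfl⟩ := exists_eq_mul_add ha m
  obtain ⟨l, t, ht, rfl⟩ := exists_eq_mul_add ha n
  rw [allButGrundy_mul_add hs, allButGrundy_mul_add ht, mul_add_eq_mul_add_iff hs ht] at h
  obtain ⟨hkl, rfl⟩ := h
  rw [mul_add_lt_mul_add_iff hs hs] at hmn
  obtain rfl : l = k + 1 := by omega
  ring

lemma exists_lt_allButGrundy_eq (ha : 0 < a) (hv : v < allButGrundy a n) :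
    ∃ m < n, n ≠ m + a ∧ allButGrundy a m = v := by
  obtain ⟨j, t, ht, rfl⟩ := exists_eq_mul_add ha v
  obtain ⟨l, s, hs, rfl⟩ := exists_eq_mul_add ha n
  rw [allButGrundy_mul_add hs, mul_add_lt_mul_add_iff ht hs] at hv
  refine ⟨a * (2 * j) + t, ?_, fun h => ?_, ?_⟩
  · rw [mul_add_lt_mul_add_iff ht hs]
    omega
  · rw [show a * (2 * j) + t + a = a * (2 * j + 1) + t by ring, mul_add_eq_mul_add_iff hs ht] at h
    omega
  · rw [allButGrundy_mul_add ht, Nat.mul_div_cancel_left j two_pos]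

theorem IsGrundy.eq_allButGrundy (ha : 0 < a) {G : ℕ → ℕ} (hG : IsGrundy {a} G) :
    G = allButGrundy a := by
  funext n
  induction n using Nat.strong_induction_on with
  | _ n ih =>
  rw [hG n]
  refine mex_eq_of_forall_lt_mem_s8 ?_ fun v hv => ?_
  · rintro ⟨t, ht, hta, htn, hGt⟩
    rw [ih (n - t) (by omega)] at hGt
    have := eq_add_of_allButGrundy_eq ha (by omega) hGt
    exact hta (by rw [Set.mem_singleton_iff]; omega)
  · obtain ⟨m, hmn, hma, rfl⟩ := exists_lt_allButGrundy_eq ha hv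
    refine ⟨n - m, by omega, by rw [Set.mem_singleton_iff]; omega, by omega, ?_⟩
    rw [Nat.sub_sub_self hmn.le, ih m hmn]

end allButGrundy

theorem stmt_8 (a : ℕ) (ha : 0 < a)
    (G : ℕ → ℕ) (hG : IsGrundy {a} G) :
    ∀ n, G (n + 2 * a) = G n + a := by
  rw [hG.eq_allButGrundy ha]
  exact allButGrundy_add_two_mul ha
end

section
/- Let a < b be positive integers with b ≠ 2a, X = {a, b, a+b}, and G the Grundy sequence of the corresponding all-but subtraction game. Suppose n is the least pile with G(n) = k, and G(n+a) = k. Then G(n+b) ≠ k. -/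
theorem stmt_9 (a b : ℕ) (ha : 0 < a) (hab : a < b) (hb : b ≠ 2 * a)
    (G : ℕ → ℕ) (hG : IsGrundy {a, b, a + b} G) (k n : ℕ)
    (hn : n = sInf {i | G i = k}) (hk : G (n + a) = k) :
    G (n + b) ≠ k := by
  intro hkb
  set S : Set ℕ :=
    {m | ∃ t, 0 < t ∧ t ∉ ({a, b, a + b} : Set ℕ) ∧ t ≤ n + b ∧ G (n + b - t) = m} with hSdef
  have hS : G (n + b) = mex S := hG (n + b)
  have hfin : S.Finite := by
    apply Set.Finite.subset ((Set.finite_Iic (n + b)).image G)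
    rintro m ⟨t, ht, -, htle, rfl⟩
    exact ⟨n + b - t, by simp, rfl⟩
  have hne : {m | m ∉ S}.Nonempty := by
    have : Sᶜ.Infinite := hfin.infinite_compl
    exact this.nonempty
  have hmex : mex S ∉ S := Nat.sInf_mem hne
  have hkS : k ∈ S := by
    refine ⟨b - a, by omega, ?_, by omega, ?_⟩
    · simp only [Set.mem_insert_iff, Set.mem_singleton_iff]
      omega
    · have : n + b - (b - a) = n + a := by omega
      rw [this, hk]
  rw [hkb] at hS
  rw [← hS] at hmex
  exact hmex hkS
end

section
/- Let X be a finite set of positive integers and G the Grundy sequence of the all-but subtraction game with excluded set X. Then the first occurrences of Grundy values are in order: for all k, min { i : G(i) = k } ≤ min { i : G(i) = k+1 }, and in particular every natural number occurs as a value of G. -/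
theorem stmt_10 (X : Finset ℕ) (hpos : ∀ x ∈ X, 0 < x)
    (G : ℕ → ℕ) (hG : IsGrundy (↑X) G) :
    (∀ k, ∃ i, G i = k) ∧
    ∀ k, sInf {i | G i = k} ≤ sInf {i | G i = k + 1} := by
  set B := X.sup id with hBdef
  have hXB : ∀ x ∈ X, x ≤ B := fun x hx => Finset.le_sup (f := id) hx
  set S : ℕ → Set ℕ :=
    fun n => {m | ∃ t, 0 < t ∧ t ∉ (↑X : Set ℕ) ∧ t ≤ n ∧ G (n - t) = m} with hSdef
  have hGS : ∀ n, G n = mex (S n) := hG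
  have hfin : ∀ n, (S n).Finite := by
    intro n
    apply Set.Finite.subset ((Set.finite_Iic n).image G)
    rintro m ⟨t, ht0, htX, htn, rfl⟩
    exact ⟨n - t, Nat.sub_le n t, rfl⟩
  have hnot : ∀ n, G n ∉ S n := by
    intro n
    rw [hGS n]
    have : {m | m ∉ S n}.Nonempty := (hfin n).infinite_compl.nonempty
    exact Nat.sInf_mem this
  have hmem : ∀ n k, k < G n → k ∈ S n := by
    intro n k hk
    rw [hGS n] at hk
    by_contra h
    exact absurd (Nat.sInf_le h) (not_le.mpr hk)
  have hdesc : ∀ n k, k < G n → ∃ j, j < n ∧ G j = k := by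
    intro n k hk
    obtain ⟨t, ht0, htX, htn, hGk⟩ := hmem n k hk
    exact ⟨n - t, by omega, hGk⟩
  have hocc : ∀ j n, j + B < n → G j ∈ S n := by
    intro j n h
    refine ⟨n - j, by omega, ?_, by omega, ?_⟩
    · intro hX
      have := hXB _ (by exact_mod_cast hX)
      omega
    · congr 1
      omega
  have hG0 : G 0 = 0 := by
    have hS0 : S 0 = ∅ := by
      ext m
      simp only [hSdef, Set.mem_setOf_eq, Set.mem_empty_iff_false, iff_false]
      rintro ⟨t, ht0, _, htn, _⟩
      omega
    rw [hGS 0, hS0]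
    have : {m | m ∉ (∅ : Set ℕ)} = Set.univ := by
      ext m; simp
    rw [mex, this]
    exact Nat.sInf_eq_zero.mpr (Or.inl trivial)
  have hP : ∀ k, ∃ N, ∀ j ≤ k, ∃ i, i ≤ N ∧ G i = j := by
    intro k
    induction k with
    | zero =>
      exact ⟨0, fun j hj => ⟨0, le_rfl, by omega⟩⟩
    | succ k ih =>
      obtain ⟨N, hN⟩ := ih
      set n := N + B + 1 with hn
      have hsub : ∀ j ≤ k, j ∈ S n := by
        intro j hj
        obtain ⟨i, hiN, hGi⟩ := hN j hj
        have := hocc i n (by omega)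
        rwa [hGi] at this
      have hGn : k + 1 ≤ G n := by
        by_contra h
        push_neg at h
        exact hnot n (hsub (G n) (by omega))
      rcases eq_or_lt_of_le hGn with heq | hlt
      · refine ⟨n, fun j hj => ?_⟩
        rcases Nat.lt_or_ge j (k + 1) with hjk | hjk
        · obtain ⟨i, hiN, hGi⟩ := hN j (by omega)
          exact ⟨i, by omega, hGi⟩
        · have : j = k + 1 := by omega
          exact ⟨n, le_rfl, by omega⟩
      · obtain ⟨j', hj'n, hGj'⟩ := hdesc n (k + 1) hlt
        refine ⟨n, fun j hj => ?_⟩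
        rcases Nat.lt_or_ge j (k + 1) with hjk | hjk
        · obtain ⟨i, hiN, hGi⟩ := hN j (by omega)
          exact ⟨i, by omega, hGi⟩
        · have : j = k + 1 := by omega
          exact ⟨j', by omega, by omega⟩
  have hsurj : ∀ k, ∃ i, G i = k := by
    intro k
    obtain ⟨N, hN⟩ := hP k
    obtain ⟨i, _, hi⟩ := hN k le_rfl
    exact ⟨i, hi⟩
  refine ⟨hsurj, fun k => ?_⟩
  have hne : {i | G i = k + 1}.Nonempty := hsurj (k + 1)
  have hn : G (sInf {i | G i = k + 1}) = k + 1 := Nat.sInf_mem hne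
  obtain ⟨t, ht0, htX, htn, hGk⟩ :=
    hmem (sInf {i | G i = k + 1}) k (by omega)
  calc sInf {i | G i = k} ≤ sInf {i | G i = k + 1} - t := Nat.sInf_le hGk
    _ ≤ sInf {i | G i = k + 1} := Nat.sub_le _ _
end

section
/- Let X be a finite set of positive integers and G the Grundy sequence of the all-but subtraction game with excluded set X. Then each value k ∈ ℕ is attained by G at most |X| + 1 times. -/
lemma key_lemma (X : Finset ℕ) (G : ℕ → ℕ) (hG : IsGrundy (↑X) G)
    {i j : ℕ} (hij : i < j) (h : G i = G j) : j - i ∈ X := by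
  by_contra hx
  set S : Set ℕ := {m | ∃ t, 0 < t ∧ t ∉ (↑X : Set ℕ) ∧ t ≤ j ∧ G (j - t) = m} with hS
  have hSsub : S ⊆ G '' (Set.Iio j) := by
    rintro m ⟨t, ht0, -, htj, he⟩
    exact ⟨j - t, Nat.sub_lt (lt_of_lt_of_le ht0 htj) ht0, he⟩
  have hSfin : S.Finite := ((Set.finite_Iio j).image G).subset hSsub
  have hne : {m | m ∉ S}.Nonempty := by
    have := hSfin.infinite_compl
    exact this.nonempty
  have hmem : G j ∉ S := by
    have := Nat.sInf_mem hne
    rw [hG j]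
    exact this
  apply hmem
  refine ⟨j - i, by omega, ?_, by omega, ?_⟩
  · simpa using hx
  · rw [Nat.sub_sub_self (le_of_lt hij)]
    exact h

theorem stmt_11 (X : Finset ℕ) (hpos : ∀ x ∈ X, 0 < x)
    (G : ℕ → ℕ) (hG : IsGrundy (↑X) G) :
    ∀ k, {i | G i = k}.ncard ≤ X.card + 1 := by
  intro k
  by_cases hfin : {i | G i = k}.Finite
  · rw [Set.ncard_eq_toFinset_card _ hfin]
    set T := hfin.toFinset with hT
    rcases Finset.eq_empty_or_nonempty T with hTe | hTne
    · simp [hTe]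
    · set j := T.max' hTne with hj
      have hjmem : j ∈ T := T.max'_mem hTne
      have hjG : G j = k := by
        have := hjmem
        rw [hT, Set.Finite.mem_toFinset] at this
        exact this
      have hcard : (T.erase j).card ≤ X.card := by
        apply Finset.card_le_card_of_injOn (fun i => j - i)
        · intro i hi
          have hi' := Finset.mem_of_mem_erase hi
          have hne := Finset.ne_of_mem_erase hi
          have hle : i ≤ j := T.le_max' i hi'
          have hlt : i < j := lt_of_le_of_ne hle hne
          have hiG : G i = k := by
            rw [hT, Set.Finite.mem_toFinset] at hi'
            exact hi'
          exact key_lemma X G hG hlt (hiG.trans hjG.symm)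
        · intro a ha b hb hab
          have haj : a ≤ j := T.le_max' a (Finset.mem_of_mem_erase ha)
          have hbj : b ≤ j := T.le_max' b (Finset.mem_of_mem_erase hb)
          simp only at hab
          omega
      calc T.card ≤ (T.erase j).card + 1 := by
            rw [Finset.card_erase_of_mem hjmem]; omega
        _ ≤ X.card + 1 := by omega
  · rw [Set.Infinite.ncard hfin]
    omega
end

section
/- Let X be a finite set of positive integers, n a positive integer, and nX = { n·x : x ∈ X }. If the Grundy sequence G_X satisfies G_X(m + p) = G_X(m) + s for all m, then the Grundy sequence G_{nX} satisfies G_{nX}(m + n·p) = G_{nX}(m) + n·s for all m; i.e., scaling the excluded set by n multiplies the period and saltus of a pure arithmetic periodicity by n. -/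
lemma mex_eq_of {S : Set ℕ} {k : ℕ} (h1 : k ∉ S) (h2 : ∀ j < k, j ∈ S) : mex S = k := by
  have hk : k ∈ {m | m ∉ S} := h1
  refine le_antisymm (Nat.sInf_le hk) ?_
  by_contra h
  push_neg at h
  exact (Nat.sInf_mem (⟨k, hk⟩ : Set.Nonempty {m | m ∉ S})) (h2 _ h)

lemma grundy_spec {X : Set ℕ} {G : ℕ → ℕ} (hG : IsGrundy X G) (q : ℕ) :
    (¬ ∃ t, 0 < t ∧ t ∉ X ∧ t ≤ q ∧ G (q - t) = G q) ∧
    (∀ j < G q, ∃ t, 0 < t ∧ t ∉ X ∧ t ≤ q ∧ G (q - t) = j) := by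
  have hGq : G q = mex {m | ∃ t, 0 < t ∧ t ∉ X ∧ t ≤ q ∧ G (q - t) = m} := hG q
  set S : Set ℕ := {m | ∃ t, 0 < t ∧ t ∉ X ∧ t ≤ q ∧ G (q - t) = m} with hSdef
  set M : ℕ := (Finset.range (q+1)).sup G + 1 with hM
  have hMb : M ∈ {m | m ∉ S} := by
    intro hm
    obtain ⟨t, ht0, htX, htq, hGt⟩ := hm
    have : G (q - t) ≤ (Finset.range (q+1)).sup G :=
      Finset.le_sup (Finset.mem_range.mpr (by omega))
    omega
  constructor
  · rw [hGq]
    exact Nat.sInf_mem ⟨M, hMb⟩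
  · intro j hj
    by_contra hjS
    have : mex S ≤ j := Nat.sInf_le hjS
    omega

lemma key (X : Finset ℕ) (hpos : ∀ x ∈ X, 0 < x) (n : ℕ) (hn : 1 ≤ n)
    (GX GnX : ℕ → ℕ) (hGX : IsGrundy (↑X) GX)
    (hGnX : IsGrundy {m | ∃ x ∈ X, m = n * x} GnX) :
    ∀ m, GnX m = n * GX (m / n) + m % n := by
  intro m
  induction m using Nat.strong_induction_on with
  | _ m IH =>
  set q := m / n with hq
  set r := m % n with hr
  have hn0 : 0 < n := hn
  have hrn : r < n := Nat.mod_lt _ hn0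
  have hm : n * q + r = m := Nat.div_add_mod m n
  rw [hGnX m]
  have reach : ∀ m' < m, (m - m') ∉ {a | ∃ x ∈ X, a = n * x} →
      (n * GX (m'/n) + m' % n) ∈
        {v | ∃ t, 0 < t ∧ t ∉ {a | ∃ x ∈ X, a = n * x} ∧ t ≤ m ∧ GnX (m - t) = v} := by
    intro m' hlt hnot
    exact ⟨m - m', by omega, hnot, by omega, by
      rw [Nat.sub_sub_self hlt.le]; exact IH m' hlt⟩
  apply mex_eq_of
  · -- the target value is not attained
    rintro ⟨t, ht0, htnX, htm, hval⟩
    have hlt : m - t < m := by omega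
    rw [IH _ hlt] at hval
    set m' := m - t with hm'
    set q' := m' / n with hq'
    have hq'lt : m' % n < n := Nat.mod_lt _ hn0
    have hmod : m' % n = r := by
      have h := congrArg (· % n) hval
      simpa [Nat.mul_add_mod, Nat.mod_eq_of_lt hq'lt, Nat.mod_eq_of_lt hrn] using h
    have hm'' : n * q' + r = m' := by rw [← hmod]; exact Nat.div_add_mod m' n
    have hGeq : GX q' = GX q := by
      rw [hmod] at hval
      have h : n * GX q' = n * GX q := by omega
      exact Nat.eq_of_mul_eq_mul_left hn0 h
    have hq'q : q' ≤ q := by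
      by_contra h
      push_neg at h
      have : n * q < n * q' := mul_lt_mul_of_pos_left h hn0
      omega
    have hdist : n * (q - q') + n * q' = n * q := by
      rw [← Nat.mul_add]
      congr 1
      omega
    have ht : t = n * (q - q') := by omega
    have hx0 : 0 < q - q' := by
      rcases Nat.eq_zero_or_pos (q - q') with h | h
      · rw [h, Nat.mul_zero] at ht; omega
      · exact h
    have hxX : (q - q') ∉ X := fun hmem => htnX ⟨q - q', hmem, ht⟩
    have hq'' : q - (q - q') = q' := Nat.sub_sub_self hq'q
    exact (grundy_spec hGX q).1 ⟨q - q', hx0, by simpa using hxX, Nat.sub_le q q', by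
      rw [hq'']; exact hGeq⟩
  · -- every smaller value is attained
    intro j hj
    set g := j / n with hg
    set r' := j % n with hr'
    have hr'n : r' < n := Nat.mod_lt _ hn0
    have hjrep : n * g + r' = j := Nat.div_add_mod j n
    have hgle : g ≤ GX q := by
      by_contra h
      push_neg at h
      have h1 : n * (GX q + 1) ≤ n * g := Nat.mul_le_mul_left n h
      have h2 : n * (GX q + 1) = n * GX q + n := by ring
      omega
    rcases lt_or_eq_of_le hgle with hglt | hgeq
    · -- g < GX q : use a move in the X-game, landing on residue r'
      obtain ⟨t0, ht0pos, ht0X, ht0q, hGt0⟩ := (grundy_spec hGX q).2 g hglt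
      have ht0X' : t0 ∉ X := by simpa using ht0X
      set m' := n * (q - t0) + r' with hm'd
      have hstep : n * (q - t0 + 1) ≤ n * q := Nat.mul_le_mul_left n (by omega)
      have hstep' : n * (q - t0 + 1) = n * (q - t0) + n := by ring
      have hm'lt : m' < m := by omega
      have hdiv : m' / n = q - t0 := by
        rw [hm'd, Nat.mul_add_div hn0, Nat.div_eq_of_lt hr'n, Nat.add_zero]
      have hmod' : m' % n = r' := by
        rw [hm'd, Nat.mul_add_mod, Nat.mod_eq_of_lt hr'n]
      have hnot : (m - m') ∉ {a | ∃ x ∈ X, a = n * x} := by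
        rintro ⟨x, hxX, hxeq⟩
        have heq : n * q + r = n * ((q - t0) + x) + r' := by
          have hd : n * ((q - t0) + x) = n * (q - t0) + n * x := by ring
          omega
        have h := congrArg (· % n) heq
        simp only [Nat.mul_add_mod, Nat.mod_eq_of_lt hrn, Nat.mod_eq_of_lt hr'n] at h
        -- deduce r = r', then x = t0 ∈ X, contradiction
        have hrr : r = r' := h
        have hqq : n * q = n * ((q - t0) + x) := by omega
        have : q = (q - t0) + x := Nat.eq_of_mul_eq_mul_left hn0 hqq
        have : x = t0 := by omega
        exact ht0X' (this ▸ hxX)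
      have hmem := reach m' hm'lt hnot
      rw [hdiv, hmod', hGt0] at hmem
      have hjeq : j = n * g + r' := hjrep.symm
      rw [hjeq]
      exact hmem
    · -- g = GX q : must have r' < r; small move within residue class
      have hng : n * g = n * GX q := by rw [hgeq]
      have hr'r : r' < r := by omega
      set m' := n * q + r' with hm'd
      have hm'lt : m' < m := by omega
      have hdiv : m' / n = q := by
        rw [hm'd, Nat.mul_add_div hn0, Nat.div_eq_of_lt hr'n, Nat.add_zero]
      have hmod' : m' % n = r' := by
        rw [hm'd, Nat.mul_add_mod, Nat.mod_eq_of_lt hr'n]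
      have hnot : (m - m') ∉ {a | ∃ x ∈ X, a = n * x} := by
        rintro ⟨x, hxX, hxeq⟩
        have hx1 : 1 ≤ x := hpos x hxX
        have : n * 1 ≤ n * x := Nat.mul_le_mul_left n hx1
        have hsm : m - m' = r - r' := by omega
        omega
      have hmem := reach m' hm'lt hnot
      rw [hdiv, hmod'] at hmem
      have hjeq : j = n * GX q + r' := by omega
      rw [hjeq]
      exact hmem

theorem stmt_13 (X : Finset ℕ) (hpos : ∀ x ∈ X, 0 < x) (n : ℕ) (hn : 1 ≤ n)
    (GX GnX : ℕ → ℕ) (hGX : IsGrundy (↑X) GX)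
    (hGnX : IsGrundy {m | ∃ x ∈ X, m = n * x} GnX)
    (p s : ℕ) (hp : 0 < p) (hap : ∀ m, GX (m + p) = GX m + s) :
    ∀ m, GnX (m + n * p) = GnX m + n * s := by
  have hkey := key X hpos n hn GX GnX hGX hGnX
  intro m
  rw [hkey (m + n * p), hkey m]
  have hd : (m + n * p) / n = m / n + p := Nat.add_mul_div_left m p hn
  have hm : (m + n * p) % n = m % n := Nat.add_mul_mod_self_left m n p
  rw [hd, hm, hap (m / n)]
  ring
end

section
/- Let X be a finite set of positive integers and G the Grundy sequence of the all-but subtraction game with excluded set X. For each k, let n_k = min { i : G(i) ≥ k }. Then the restriction of the indicator pattern (G < k) to the window [n_k, n_k + max(X) − 1] (the 'boundary pattern' of H_k) determines the boundary pattern of H_{k+1}; consequently, if two indices k < k' have equal boundary patterns, then the sequence of boundary patterns is periodic from k onward with period k' − k. -/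
section Aux

variable {X : Finset ℕ} {G : ℕ → ℕ}

lemma ge_iff (hG : IsGrundy (↑X) G) (k n : ℕ) :
    k ≤ G n ↔ ∀ m < k, ∃ t, 0 < t ∧ t ∉ (X : Set ℕ) ∧ t ≤ n ∧ G (n - t) = m := by
  have hfin : {m | ∃ t, 0 < t ∧ t ∉ (X : Set ℕ) ∧ t ≤ n ∧ G (n - t) = m}.Finite := by
    apply Set.Finite.subset ((Set.finite_Iic n).image G)
    rintro m ⟨t, _, _, _, rfl⟩
    exact ⟨n - t, Nat.sub_le n t, rfl⟩
  have hcne : Set.Nonempty {m | m ∉ {m | ∃ t, 0 < t ∧ t ∉ (X : Set ℕ) ∧ t ≤ n ∧ G (n - t) = m}} :=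
    hfin.infinite_compl.nonempty
  rw [hG n]
  simp only [mex]
  constructor
  · intro hk m hm
    by_contra hmem
    have h2 := Nat.sInf_le (s := {m | m ∉ {m | ∃ t, 0 < t ∧ t ∉ (X : Set ℕ) ∧ t ≤ n ∧ G (n - t) = m}}) hmem
    omega
  · intro hall
    refine le_csInf hcne ?_
    intro b hb
    by_contra hlt
    exact hb (hall b (by omega))

lemma not_mem_X (hne : X.Nonempty) {t : ℕ} (ht : X.max' hne < t) : t ∉ (X : Set ℕ) := by
  intro h
  exact absurd (X.le_max' t h) (not_le.2 ht)

lemma nonempty_S (hne : X.Nonempty) (hG : IsGrundy (↑X) G) :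
    ∀ k, Set.Nonempty {i | k ≤ G i} := by
  intro k
  induction k with
  | zero => exact ⟨0, Nat.zero_le _⟩
  | succ k ih =>
    set a := sInf {i | k ≤ G i} with hA
    have ha : k ≤ G a := Nat.sInf_mem ih
    have haeq : G a = k := by
      refine le_antisymm ?_ ha
      by_contra hc
      push_neg at hc
      obtain ⟨t, ht0, htX, htle, hGt⟩ := (ge_iff hG (k + 1) a).mp hc k (by omega)
      have h1 : k ≤ G (a - t) := le_of_eq hGt.symm
      have h2 := Nat.sInf_le (s := {i | k ≤ G i}) h1
      omega
    set M := X.max' hne with hM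
    refine ⟨a + M + 1, ?_⟩
    show k + 1 ≤ G (a + M + 1)
    rw [ge_iff hG]
    intro m hm
    rcases Nat.lt_succ_iff_lt_or_eq.mp hm with hm' | rfl
    · obtain ⟨t, ht0, htX, htle, hGt⟩ := (ge_iff hG k a).mp ha m hm'
      refine ⟨t + M + 1, by omega, not_mem_X hne (by omega), by omega, ?_⟩
      have he : a + M + 1 - (t + M + 1) = a - t := by omega
      rw [he, hGt]
    · refine ⟨M + 1, by omega, not_mem_X hne (by omega), by omega, ?_⟩
      have he : a + M + 1 - (M + 1) = a := by omega
      rw [he, haeq]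

lemma ge_of_far (hne : X.Nonempty) (hG : IsGrundy (↑X) G) (k n : ℕ)
    (h : sInf {i | k ≤ G i} + X.max' hne ≤ n) : k ≤ G n := by
  set a := sInf {i | k ≤ G i} with hA
  set M := X.max' hne with hM
  have ha : k ≤ G a := Nat.sInf_mem (nonempty_S hne hG k)
  rw [ge_iff hG]
  intro m hm
  obtain ⟨t, ht0, htX, htle, hGt⟩ := (ge_iff hG k a).mp ha m hm
  refine ⟨n - (a - t), by omega, not_mem_X hne (by omega), by omega, ?_⟩
  have he : n - (n - (a - t)) = a - t := by omega
  rw [he, hGt]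

lemma succ_iff (hG : IsGrundy (↑X) G) (k n : ℕ) :
    k + 1 ≤ G n ↔ (k ≤ G n ∧ ∃ t, 0 < t ∧ t ∉ (X : Set ℕ) ∧ t ≤ n ∧ G (n - t) = k) := by
  rw [ge_iff hG, ge_iff hG]
  constructor
  · intro h
    exact ⟨fun m hm => h m (by omega), h k (by omega)⟩
  · rintro ⟨h1, h2⟩ m hm
    rcases Nat.lt_succ_iff_lt_or_eq.mp hm with h | rfl
    · exact h1 m h
    · exact h2

lemma shift_succ (hG : IsGrundy (↑X) G) (k k' d : ℕ)
    (hd : sInf {i | k' ≤ G i} = sInf {i | k ≤ G i} + d)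
    (hshift : ∀ n, (k' ≤ G (n + d)) ↔ (k ≤ G n)) :
    ∀ n, (k' + 1 ≤ G (n + d)) ↔ (k + 1 ≤ G n) := by
  intro n
  induction n using Nat.strong_induction_on with
  | _ n IH =>
  rw [succ_iff hG, succ_iff hG]
  constructor
  · rintro ⟨h1, t, ht0, htX, htle, hGt⟩
    refine ⟨(hshift n).mp h1, ?_⟩
    have hm'S : k' ≤ G (n + d - t) := le_of_eq hGt.symm
    have hge := Nat.sInf_le (s := {i | k' ≤ G i}) hm'S
    have htn : t ≤ n := by omega
    have hmd : (n - t) + d = n + d - t := by omega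
    have hkm : k ≤ G (n - t) := (hshift (n - t)).mp (by rw [hmd]; exact hm'S)
    have hnot : ¬ (k + 1 ≤ G (n - t)) := by
      intro hc
      have h3 := (IH (n - t) (by omega)).mpr hc
      rw [hmd, hGt] at h3
      omega
    exact ⟨t, ht0, htX, htn, by omega⟩
  · rintro ⟨h1, t, ht0, htX, htle, hGt⟩
    refine ⟨(hshift n).mpr h1, t, ht0, htX, by omega, ?_⟩
    have hmd : n + d - t = (n - t) + d := by omega
    rw [hmd]
    have hk' : k' ≤ G ((n - t) + d) := (hshift (n - t)).mpr (le_of_eq hGt.symm)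
    have hnot : ¬ (k' + 1 ≤ G ((n - t) + d)) := by
      intro hc
      have h3 := (IH (n - t) (by omega)).mp hc
      omega
    omega

lemma shift_base (hne : X.Nonempty) (hG : IsGrundy (↑X) G) (k k' : ℕ) (hkk : k ≤ k')
    (hiff : ∀ j < X.max' hne,
      (G (sInf {i | k ≤ G i} + j) < k ↔ G (sInf {i | k' ≤ G i} + j) < k')) :
    ∀ n, (k' ≤ G (n + (sInf {i | k' ≤ G i} - sInf {i | k ≤ G i}))) ↔ (k ≤ G n) := by
  set a := sInf {i | k ≤ G i} with hA
  set b := sInf {i | k' ≤ G i} with hB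
  set M := X.max' hne with hM
  have hb : k' ≤ G b := Nat.sInf_mem (nonempty_S hne hG k')
  have hab : a ≤ b := Nat.sInf_le (s := {i | k ≤ G i}) (le_trans hkk hb)
  intro n
  rcases lt_or_ge n a with hlt | hge
  · have h1 : ¬ (k ≤ G n) := by
      intro hc
      have := Nat.sInf_le (s := {i | k ≤ G i}) hc
      omega
    have h2 : ¬ (k' ≤ G (n + (b - a))) := by
      intro hc
      have := Nat.sInf_le (s := {i | k' ≤ G i}) hc
      omega
    constructor <;> (intro h; omega)
  · rcases lt_or_ge n (a + M) with hlt2 | hge2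
    · have hj := hiff (n - a) (by omega)
      have e1 : a + (n - a) = n := by omega
      have e2 : b + (n - a) = n + (b - a) := by omega
      rw [e1, e2] at hj
      omega
    · have h1 : k ≤ G n := ge_of_far hne hG k n (by omega)
      have h2 : k' ≤ G (n + (b - a)) := ge_of_far hne hG k' (n + (b - a)) (by omega)
      constructor <;> (intro h; omega)

lemma pat_step (hne : X.Nonempty) (hG : IsGrundy (↑X) G)
    (pat : ℕ → Fin (X.max' hne) → Bool)
    (hpat : ∀ k j, pat k j = decide (G (sInf {i | k ≤ G i} + (j : ℕ)) < k))
    (k k' : ℕ) (hkk : k ≤ k') (hp : pat k = pat k') : pat (k + 1) = pat (k' + 1) := by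
  have hiff : ∀ j < X.max' hne,
      (G (sInf {i | k ≤ G i} + j) < k ↔ G (sInf {i | k' ≤ G i} + j) < k') := by
    intro j hj
    have h := congrFun hp ⟨j, hj⟩
    rw [hpat, hpat] at h
    simpa using h
  have hsh := shift_base hne hG k k' hkk hiff
  have hb : k' ≤ G (sInf {i | k' ≤ G i}) := Nat.sInf_mem (nonempty_S hne hG k')
  have hab : sInf {i | k ≤ G i} ≤ sInf {i | k' ≤ G i} :=
    Nat.sInf_le (s := {i | k ≤ G i}) (le_trans hkk hb)
  have hs1 := shift_succ hG k k' (sInf {i | k' ≤ G i} - sInf {i | k ≤ G i}) (by omega) hsh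
  have ha1 : k + 1 ≤ G (sInf {i | k + 1 ≤ G i}) := Nat.sInf_mem (nonempty_S hne hG (k + 1))
  have hb1 : k' + 1 ≤ G (sInf {i | k' + 1 ≤ G i}) := Nat.sInf_mem (nonempty_S hne hG (k' + 1))
  have hle1 : sInf {i | k' + 1 ≤ G i} ≤
      sInf {i | k + 1 ≤ G i} + (sInf {i | k' ≤ G i} - sInf {i | k ≤ G i}) :=
    Nat.sInf_le (s := {i | k' + 1 ≤ G i}) ((hs1 _).mpr ha1)
  have hgeb : sInf {i | k' ≤ G i} ≤ sInf {i | k' + 1 ≤ G i} :=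
    Nat.sInf_le (s := {i | k' ≤ G i}) (show k' ≤ G (sInf {i | k' + 1 ≤ G i}) by omega)
  have hx : sInf {i | k' + 1 ≤ G i} - (sInf {i | k' ≤ G i} - sInf {i | k ≤ G i})
      + (sInf {i | k' ≤ G i} - sInf {i | k ≤ G i}) = sInf {i | k' + 1 ≤ G i} := by omega
  have h2 : k + 1 ≤ G (sInf {i | k' + 1 ≤ G i} -
      (sInf {i | k' ≤ G i} - sInf {i | k ≤ G i})) := (hs1 _).mp (by rw [hx]; exact hb1)
  have hge1 := Nat.sInf_le (s := {i | k + 1 ≤ G i}) h2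
  funext j
  rw [hpat, hpat, decide_eq_decide]
  have hj := hs1 (sInf {i | k + 1 ≤ G i} + (j : ℕ))
  have he : sInf {i | k + 1 ≤ G i} + (j : ℕ) + (sInf {i | k' ≤ G i} - sInf {i | k ≤ G i})
      = sInf {i | k' + 1 ≤ G i} + (j : ℕ) := by omega
  rw [he] at hj
  omega

end Aux

theorem stmt_19 (X : Finset ℕ) (hne : X.Nonempty) (hpos : ∀ x ∈ X, 0 < x)
    (G : ℕ → ℕ) (hG : IsGrundy (↑X) G)
    (pat : ℕ → Fin (X.max' hne) → Bool)
    (hpat : ∀ k j, pat k j = decide (G (sInf {i | k ≤ G i} + (j : ℕ)) < k)) :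
    (∀ k k', pat k = pat k' → pat (k + 1) = pat (k' + 1)) ∧
    (∀ k k', k < k' → pat k = pat k' → ∀ j, k ≤ j →
      pat (j + (k' - k)) = pat j) := by
  have step := pat_step hne hG pat hpat
  constructor
  · intro k k' hp
    rcases le_total k k' with h | h
    · exact step k k' h hp
    · exact (step k' k h hp.symm).symm
  · intro k k' hlt hp j hj
    have key : ∀ i, pat (k + i) = pat (k' + i) := by
      intro i
      induction i with
      | zero => simpa using hp
      | succ i ih => exact step (k + i) (k' + i) (by omega) ih
    have h1 := key (j - k)
    have e1 : k + (j - k) = j := by omega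
    have e2 : k' + (j - k) = j + (k' - k) := by omega
    rw [e1, e2] at h1
    exact h1.symm
end
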